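/- arXiv:2002.08995 — 4 statements merged into one kernel-verified Lean document; each statement's English description precedes it below -/
import Mathlib

section
/- For the cubic form f = x₀x₃² + x₁x₃x₄ + x₂x₄² in K[x₀,x₁,x₂,x₃,x₄] over a field K of characteristic zero, the Hessian determinant of f (the determinant of the 5×5 matrix of second partial derivatives) is identically zero. -/
/-!
The cubic `f` is linear in `x₀, x₁, x₂`, so its Hessian has a zero `3 × 3` block in the rows
and columns `0, 1, 2`. Since `3 + 3 > 5`, every permutation `σ` of `Fin 5` sends one of the
columns `0, 1, 2` into one of the rows `0, 1, 2`, so every term of the Leibniz expansion of the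
determinant vanishes.
-/

open MvPolynomial

theorem Matrix.det_eq_zero_of_zero_block {n R : Type*} [Fintype n] [DecidableEq n] [CommRing R]
    (M : Matrix n n R) (I J : Finset n) (hIJ : Fintype.card n < I.card + J.card)
    (hM : ∀ i ∈ I, ∀ j ∈ J, M i j = 0) : M.det = 0 := by
  rw [Matrix.det_apply]
  refine Finset.sum_eq_zero fun σ _ => ?_
  have hcard : (Finset.univ : Finset n).card < I.card + (J.map σ.toEmbedding).card := by
    simpa using hIJ
  obtain ⟨i, hi⟩ := Finset.inter_nonempty_of_card_lt_card_add_card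
    (Finset.subset_univ _) (Finset.subset_univ _) hcard
  obtain ⟨hiI, hiJ⟩ := Finset.mem_inter.mp hi
  obtain ⟨j, hj, rfl⟩ := Finset.mem_map.mp hiJ
  rw [Finset.prod_eq_zero (f := fun k => M (σ k) k) (Finset.mem_univ j) (hM _ hiI j hj), smul_zero]

theorem hessian_vanishes_general (K : Type*) [Field K]
    (f : MvPolynomial (Fin 5) K)
    (hf : f = X 0 * X 3 ^ 2 + X 1 * X 3 * X 4 + X 2 * X 4 ^ 2) :
    (Matrix.of fun i j : Fin 5 => pderiv i (pderiv j f)).det = 0 := by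
  refine Matrix.det_eq_zero_of_zero_block _ {0, 1, 2} {0, 1, 2} (by decide) ?_
  simp only [Finset.mem_insert, Finset.mem_singleton, Matrix.of_apply]
  rintro i hi j hj
  rcases hi with rfl | rfl | rfl <;> rcases hj with rfl | rfl | rfl <;> simp [hf, pderiv_X]

/-- For `f = x₀x₃² + x₁x₃x₄ + x₂x₄²` over a field `K` of characteristic
zero, the Hessian determinant (determinant of the 5×5 matrix of second partial
derivatives) is identically zero. -/
theorem hessian_vanishes (K : Type*) [Field K] [CharZero K]
    (f : MvPolynomial (Fin 5) K)
    (hf : f = X 0 * X 3 ^ 2 + X 1 * X 3 * X 4 + X 2 * X 4 ^ 2) :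
    (Matrix.of fun i j : Fin 5 => pderiv i (pderiv j f)).det = 0 :=
  hessian_vanishes_general K f hf
end

section
/- Let f = x₀x₃² + x₁x₃x₄ + x₂x₄² over a field K of characteristic zero and A = Q/Ann_f the associated Artinian Gorenstein algebra, where Q = K[X₀,…,X₄] acts on K[x₀,…,x₄] by differentiation. Then the Hilbert function of A is (1,5,5,1), i.e., dim_K A₀ = 1, dim_K A₁ = 5, dim_K A₂ = 5, dim_K A₃ = 1, and A_k = 0 for k ≥ 4. -/
open MvPolynomial Module

/-- The action of a polynomial differential operator `α ∈ Q = K[X₀,…,X_N]` on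
`f ∈ R = K[x₀,…,x_N]`, where the variable `Xᵢ` acts as `∂/∂xᵢ`. -/
noncomputable def applyOp {K : Type*} [CommSemiring K] {n : ℕ}
    (α f : MvPolynomial (Fin n) K) : MvPolynomial (Fin n) K :=
  ∑ m ∈ α.support,
    α.coeff m •
      ((List.ofFn fun i : Fin n =>
          ((pderiv i).toLinearMap ^ m i : Module.End K (MvPolynomial (Fin n) K))).prod f)


/-!
Contraction by `α` is linear in `α`, so the span of `{α(f) : α ∈ Q_k}` is the span of the
`k`-th order partial derivatives `∂^m f`, `|m| = k`. Each partial derivative lowers the degree of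
a homogeneous polynomial by one, so for the cubic `f` these lie among the forms of degree `3 - k`
and vanish once `k ≥ 4`. For `k = 0, 1` the spans are `⟨f⟩` and the span of the five linearly
independent first partials; for `k = 2, 3` suitable second and third partials of `f` produce
every variable and the constant `1`, up to a factor `2`.
-/

section RaisingMaps

variable {K M : Type*} [CommSemiring K] [AddCommMonoid M] [Module K M]

noncomputable def raisingMaps (W : ℕ → Submodule K M) (d : ℕ) :
    Submodule K (Module.End K M) :=
  ⨅ j, Submodule.compatibleMaps (W j) (W (j + d))

lemma mem_raisingMaps {W : ℕ → Submodule K M} {d : ℕ} {T : Module.End K M} :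
    T ∈ raisingMaps W d ↔ ∀ j, ∀ x ∈ W j, T x ∈ W (j + d) := by
  simp [raisingMaps, Submodule.compatibleMaps, SetLike.le_def]

instance (W : ℕ → Submodule K M) : SetLike.GradedMonoid (raisingMaps W) where
  one_mem := mem_raisingMaps.2 fun _ _ hx => hx
  mul_mem d e S T hS hT := mem_raisingMaps.2 fun j x hx => by
    simpa [add_comm d e, ← add_assoc] using
      mem_raisingMaps.1 hS _ _ (mem_raisingMaps.1 hT j x hx)

end RaisingMaps

namespace MvPolynomial

lemma IsHomogeneous.pderiv_eq_zero {σ R : Type*} [CommSemiring R] {φ : MvPolynomial σ R}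
    (hφ : φ.IsHomogeneous 0) (i : σ) : pderiv i φ = 0 := by
  rw [← totalDegree_zero_iff_isHomogeneous, totalDegree_eq_zero_iff_eq_C] at hφ
  rw [hφ, pderiv_C]

section Codegree

variable (σ K : Type*) [CommSemiring K]

-- `d - j` truncates in `ℕ`, hence the explicit `⊥` once `j > d`.
noncomputable def homogeneousOfCodegree (d j : ℕ) : Submodule K (MvPolynomial σ K) :=
  if j ≤ d then homogeneousSubmodule σ K (d - j) else ⊥

variable {σ K}

lemma pderiv_mem_raisingMaps_homogeneousOfCodegree (d : ℕ) (i : σ) :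
    (pderiv i).toLinearMap ∈ raisingMaps (homogeneousOfCodegree σ K d) 1 := by
  refine mem_raisingMaps.2 fun j p hp => ?_
  unfold homogeneousOfCodegree at hp ⊢
  rcases Nat.lt_or_ge j d with hj | hj
  · rw [if_pos hj.le] at hp
    rw [if_pos (Nat.succ_le_of_lt hj), Nat.sub_add_eq]
    exact (mem_homogeneousSubmodule _ _).2 ((mem_homogeneousSubmodule _ _).1 hp).pderiv
  rw [if_neg (by omega), Submodule.mem_bot]
  rcases hj.eq_or_lt with rfl | hj
  · rw [if_pos le_rfl, Nat.sub_self, mem_homogeneousSubmodule] at hp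
    exact hp.pderiv_eq_zero i
  · rw [if_neg hj.not_ge, Submodule.mem_bot] at hp
    rw [hp, map_zero]

end Codegree

variable {K : Type*} [CommSemiring K] {n : ℕ}

noncomputable def iteratedPDeriv (m : Fin n →₀ ℕ) : Module.End K (MvPolynomial (Fin n) K) :=
  (List.ofFn fun i => (pderiv i).toLinearMap ^ m i).prod

lemma iteratedPDeriv_mem_raisingMaps {W : ℕ → Submodule K (MvPolynomial (Fin n) K)}
    (hW : ∀ i, (pderiv i).toLinearMap ∈ raisingMaps W 1) (m : Fin n →₀ ℕ) :
    iteratedPDeriv m ∈ raisingMaps W m.degree := by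
  have := SetLike.list_prod_ofFn_mem_graded (A := raisingMaps W) (fun i => m i • 1) _
    fun i => SetLike.pow_mem_graded (m i) (hW i)
  simpa [List.sum_ofFn, Finsupp.degree_eq_sum, iteratedPDeriv] using this

lemma applyOp_eq_constr (α f : MvPolynomial (Fin n) K) :
    applyOp α f = (basisMonomials (Fin n) K).constr K (fun m => iteratedPDeriv m f) α := by
  rw [Basis.constr_apply, Finsupp.sum]
  rfl

lemma span_image_applyOp_eq_span_image_iteratedPDeriv (f : MvPolynomial (Fin n) K) (k : ℕ) :
    Submodule.span K ((fun α => applyOp α f) '' {α | α.IsHomogeneous k}) =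
      Submodule.span K ((fun m => iteratedPDeriv m f) '' {m | m.degree = k}) := by
  let L := (basisMonomials (Fin n) K).constr K (fun m => iteratedPDeriv m f)
  have hL : (fun α => applyOp α f) = L := by funext α; exact applyOp_eq_constr α f
  have hH : {α : MvPolynomial (Fin n) K | α.IsHomogeneous k} = homogeneousSubmodule (Fin n) K k :=
    rfl
  rw [hL, hH, ← Submodule.map_coe, Submodule.span_eq, homogeneousSubmodule_eq_finsupp_supported,
    AddMonoidAlgebra.supported_eq_span_single, Submodule.map_span, ← Set.image_comp]
  congr 2
  funext m
  exact (basisMonomials (Fin n) K).constr_basis K _ m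

@[simp]
lemma iteratedPDeriv_zero : iteratedPDeriv (0 : Fin n →₀ ℕ) = (1 : Module.End K _) := by
  simp [iteratedPDeriv]

@[simp]
lemma iteratedPDeriv_single_one (i : Fin n) :
    iteratedPDeriv (Finsupp.single i 1) = ((pderiv i).toLinearMap : Module.End K _) := by
  rw [iteratedPDeriv, List.ofFn_eq_map, List.prod_map_eq_pow_single i,
    List.count_eq_one_of_mem (List.nodup_finRange n) (List.mem_finRange i)] <;> simp_all

lemma span_image_applyOp_isHomogeneous_zero (f : MvPolynomial (Fin n) K) :
    Submodule.span K ((fun α => applyOp α f) '' {α | α.IsHomogeneous 0}) = K ∙ f := by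
  simp [span_image_applyOp_eq_span_image_iteratedPDeriv, Finsupp.degree_eq_zero_iff]

lemma span_image_applyOp_isHomogeneous_one (f : MvPolynomial (Fin n) K) :
    Submodule.span K ((fun α => applyOp α f) '' {α | α.IsHomogeneous 1}) =
      Submodule.span K (Set.range fun i => pderiv i f) := by
  rw [span_image_applyOp_eq_span_image_iteratedPDeriv, ← Finsupp.range_single_one,
    ← Set.range_comp]
  simp [Function.comp_def]

lemma span_image_applyOp_le_homogeneousOfCodegree {f : MvPolynomial (Fin n) K} {d : ℕ}
    (hf : f.IsHomogeneous d) (k : ℕ) :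
    Submodule.span K ((fun α => applyOp α f) '' {α | α.IsHomogeneous k}) ≤
      homogeneousOfCodegree (Fin n) K d k := by
  rw [span_image_applyOp_eq_span_image_iteratedPDeriv, Submodule.span_le]
  rintro _ ⟨m, rfl, rfl⟩
  have hf₀ : f ∈ homogeneousOfCodegree (Fin n) K d 0 := by
    simpa [homogeneousOfCodegree] using hf
  simpa using mem_raisingMaps.1 (iteratedPDeriv_mem_raisingMaps
    (pderiv_mem_raisingMaps_homogeneousOfCodegree d) m) 0 f hf₀

lemma span_image_applyOp_le_homogeneousSubmodule {f : MvPolynomial (Fin n) K} {d k : ℕ}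
    (hf : f.IsHomogeneous d) (hk : k ≤ d) :
    Submodule.span K ((fun α => applyOp α f) '' {α | α.IsHomogeneous k}) ≤
      homogeneousSubmodule (Fin n) K (d - k) := by
  simpa [homogeneousOfCodegree, hk] using span_image_applyOp_le_homogeneousOfCodegree hf k

lemma applyOp_eq_zero_of_lt {f α : MvPolynomial (Fin n) K} {d k : ℕ} (hf : f.IsHomogeneous d)
    (hk : d < k) (hα : α.IsHomogeneous k) : applyOp α f = 0 := by
  have := span_image_applyOp_le_homogeneousOfCodegree hf k
    (Submodule.subset_span ⟨α, hα, rfl⟩)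
  simpa [homogeneousOfCodegree, hk.not_ge] using this

end MvPolynomial

noncomputable def perazzoCubic (K : Type*) [CommSemiring K] : MvPolynomial (Fin 5) K :=
  X 0 * X 3 ^ 2 + X 1 * X 3 * X 4 + X 2 * X 4 ^ 2

section PerazzoCubic

variable {K : Type*} [Field K]

lemma isHomogeneous_perazzoCubic : (perazzoCubic K).IsHomogeneous 3 := by
  have hX (i : Fin 5) : (X i : MvPolynomial (Fin 5) K).IsHomogeneous 1 := isHomogeneous_X K i
  exact (((hX 0).mul ((hX 3).pow 2)).add (((hX 1).mul (hX 3)).mul (hX 4))).add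
    ((hX 2).mul ((hX 4).pow 2))

lemma perazzoCubic_ne_zero : perazzoCubic K ≠ 0 := fun h => by
  simpa [perazzoCubic] using congrArg (eval ![1, 0, 0, 1, 0]) h

lemma linearIndependent_pderiv_perazzoCubic :
    LinearIndependent K fun i => pderiv i (perazzoCubic K) := by
  rw [Fintype.linearIndependent_iff]
  intro g hg
  have hev (x : Fin 5 → K) : ∑ i, g i * eval x (pderiv i (perazzoCubic K)) = 0 := by
    simpa using congrArg (eval x) hg
  have h₀ := hev ![0, 0, 0, 1, 0]
  have h₂ := hev ![0, 0, 0, 0, 1]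
  have h₁ := hev ![0, 0, 0, 1, 1]
  have h₃ := hev ![0, 1, 0, 0, 1]
  have h₄ := hev ![0, 1, 0, 1, 0]
  simp [Fin.sum_univ_five, perazzoCubic] at h₀ h₁ h₂ h₃ h₄
  have h₁' : g 1 = 0 := by linear_combination h₁ - h₀ - h₂
  have h₃' : g 3 = 0 := by linear_combination h₃ - h₂
  have h₄' : g 4 = 0 := by linear_combination h₄ - h₀
  intro i
  fin_cases i <;> assumption

lemma span_image_applyOp_perazzoCubic_two [NeZero (2 : K)] :
    Submodule.span K ((fun α => applyOp α (perazzoCubic K)) '' {α | α.IsHomogeneous 2}) =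
      Submodule.span K (Set.range X) := by
  refine le_antisymm ?_ (Submodule.span_le.2 (Set.range_subset_iff.2 fun i => ?_))
  · rw [← homogeneousSubmodule_one_eq_span_X]
    exact span_image_applyOp_le_homogeneousSubmodule isHomogeneous_perazzoCubic (by norm_num)
  rw [span_image_applyOp_eq_span_image_iteratedPDeriv]
  obtain ⟨c, m, hc, hm, h⟩ : ∃ (c : K) (m : Fin 5 →₀ ℕ),
      c ≠ 0 ∧ m.degree = 2 ∧ iteratedPDeriv m (perazzoCubic K) = c • X i := by
    -- `∂₃²f = 2x₀`, `∂₃∂₄f = x₁`, `∂₄²f = 2x₂`, `∂₀∂₃f = 2x₃`, `∂₁∂₃f = x₄`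
    refine ⟨![(2 : K), 1, 2, 2, 1] i, ![.single 3 2, .single 3 1 + .single 4 1, .single 4 2,
      .single 0 1 + .single 3 1, .single 1 1 + .single 3 1] i, ?_, ?_, ?_⟩ <;>
    fin_cases i <;>
    simp [iteratedPDeriv, List.ofFn_succ, Finsupp.single_apply, perazzoCubic, pow_succ,
      two_smul, two_ne_zero] <;> ring
  rw [← inv_smul_smul₀ hc (X i), ← h]
  exact Submodule.smul_mem _ _ (Submodule.subset_span ⟨m, hm, rfl⟩)

lemma span_image_applyOp_perazzoCubic_three :
    Submodule.span K ((fun α => applyOp α (perazzoCubic K)) '' {α | α.IsHomogeneous 3}) =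
      K ∙ 1 := by
  refine le_antisymm ?_ (Submodule.span_le.2 (Set.singleton_subset_iff.2 ?_))
  · rw [← Submodule.one_eq_span, ← homogeneousSubmodule_zero]
    exact span_image_applyOp_le_homogeneousSubmodule isHomogeneous_perazzoCubic le_rfl
  rw [span_image_applyOp_eq_span_image_iteratedPDeriv]
  refine Submodule.subset_span
    ⟨.single 1 1 + .single 3 1 + .single 4 1, by simp, ?_⟩
  simp [iteratedPDeriv, List.ofFn_succ, Finsupp.single_apply, perazzoCubic, pow_succ]

end PerazzoCubic

/-- For `f = x₀x₃² + x₁x₃x₄ + x₂x₄²`, the Artinian Gorenstein algebra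
`A = Q/Ann_f` has Hilbert function `(1,5,5,1)`.  Since the degree-`k` graded piece
`A_k = Q_k/(Ann_f)_k` is isomorphic (as a `K`-vector space) to the image of the
contraction map `Q_k → R_{3-k}`, `α ↦ α(f)`, we express `dim_K A_k` as the dimension
of the span of `{α(f) : α ∈ Q_k homogeneous of degree k}`, and `A_k = 0` for `k ≥ 4`
as the vanishing of that span. -/
theorem hilbert_vector_of_perazzo_cubic (K : Type*) [Field K] [CharZero K]
    (f : MvPolynomial (Fin 5) K)
    (hf : f = X 0 * X 3 ^ 2 + X 1 * X 3 * X 4 + X 2 * X 4 ^ 2) :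
    (finrank K (Submodule.span K
        ((fun α => applyOp α f) '' {α : MvPolynomial (Fin 5) K | α.IsHomogeneous 0})) = 1) ∧
    (finrank K (Submodule.span K
        ((fun α => applyOp α f) '' {α : MvPolynomial (Fin 5) K | α.IsHomogeneous 1})) = 5) ∧
    (finrank K (Submodule.span K
        ((fun α => applyOp α f) '' {α : MvPolynomial (Fin 5) K | α.IsHomogeneous 2})) = 5) ∧
    (finrank K (Submodule.span K
        ((fun α => applyOp α f) '' {α : MvPolynomial (Fin 5) K | α.IsHomogeneous 3})) = 1) ∧
    (∀ k : ℕ, 4 ≤ k → ∀ α : MvPolynomial (Fin 5) K, α.IsHomogeneous k →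
        applyOp α f = 0) := by
  obtain rfl : perazzoCubic K = f := hf.symm
  refine ⟨?_, ?_, ?_, ?_,
    fun k hk α hα => applyOp_eq_zero_of_lt isHomogeneous_perazzoCubic hk hα⟩
  · rw [span_image_applyOp_isHomogeneous_zero, finrank_span_singleton perazzoCubic_ne_zero]
  · rw [span_image_applyOp_isHomogeneous_one,
      finrank_span_eq_card linearIndependent_pderiv_perazzoCubic, Fintype.card_fin]
  · rw [span_image_applyOp_perazzoCubic_two,
      finrank_span_eq_card (linearIndependent_X (Fin 5) K), Fintype.card_fin]
  · rw [span_image_applyOp_perazzoCubic_three, finrank_span_singleton one_ne_zero]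
end

section
/- Let K be a field of characteristic zero and f ∈ K[x₀,…,x_N] homogeneous of degree 3 with linearly independent partial derivatives, and let A = Q/Ann_f. For a linear form L = a₀X₀ + … + a_NX_N ∈ A₁, the multiplication map L: A₁ → A₂ is an isomorphism if and only if the Hessian determinant of f does not vanish at the point (a₀,…,a_N). -/
/-!
For `α = ∑ cⱼ Xⱼ` one has `(L α)(f) = ∑ᵢ aᵢ ∂ᵢ (∑ⱼ cⱼ ∂ⱼ f)`, and for a quadratic form `q` the
derivative `∑ᵢ aᵢ ∂ᵢ q` in direction `a` is the linear form `∑ₖ (∂ₖ q)(a) xₖ`. Applied to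
`q = ∂ⱼ f`, this shows that `(L α)(f)` is the linear form with coefficient vector `H(a) c`, where
`H(a)` is the Hessian matrix of `f` at `a`. Since `α ↦ α(f)` is injective on linear forms and
`β(f)` is a linear form for every quadric `β`, multiplication by `L` is injective exactly when
`H(a)` is invertible, and then it is also surjective.
-/

open MvPolynomial

theorem List.prod_ofFn_mul_of_commute {M : Type*} [Monoid M] {n : ℕ} (g h : Fin n → M)
    (hgh : ∀ i j, Commute (g i) (h j)) :
    (List.ofFn fun i => g i * h i).prod = (List.ofFn g).prod * (List.ofFn h).prod := by
  induction n with
  | zero => simp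
  | succ n ih =>
    have hcomm : Commute (h 0) (List.ofFn fun i => g i.succ).prod :=
      Commute.list_prod_right _ _ fun x hx => by
        obtain ⟨i, rfl⟩ := List.mem_ofFn.mp hx
        exact (hgh _ _).symm
    simp only [List.ofFn_succ, List.prod_cons]
    rw [ih _ _ fun i j => hgh _ _, mul_assoc, ← mul_assoc (h 0), hcomm.eq]
    simp only [mul_assoc]

theorem List.prod_ofFn_eq_of_forall_ne_eq_one {M : Type*} [Monoid M] {n : ℕ} (g : Fin n → M)
    (i : Fin n) (hg : ∀ j, j ≠ i → g j = 1) : (List.ofFn g).prod = g i := by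
  rw [List.ofFn_eq_map, List.prod_map_eq_pow_single i g fun j hj _ => hg j hj,
    List.count_eq_one_of_mem (List.nodup_finRange n) (List.mem_finRange i), pow_one]

namespace MvPolynomial

variable {R σ : Type*} [CommSemiring R]

theorem pderiv_pderiv_comm (i j : σ) (p : MvPolynomial σ R) :
    pderiv i (pderiv j p) = pderiv j (pderiv i p) := by
  classical
  induction p using MvPolynomial.induction_on with
  | C a => simp
  | add p q hp hq => simp only [map_add, hp, hq]
  | mul_X p k hp =>
    simp only [pderiv_mul, map_add, pderiv_X, hp, Pi.single_apply]
    split_ifs <;> simp [add_comm, add_left_comm]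

theorem IsHomogeneous.pderiv_pow {p : MvPolynomial σ R} {k e : ℕ} (hp : p.IsHomogeneous (k + e))
    (i : σ) :
    (((pderiv i).toLinearMap ^ k : Module.End R (MvPolynomial σ R)) p).IsHomogeneous e := by
  induction k generalizing p with
  | zero => simpa using hp
  | succ k ih =>
    rw [pow_succ, Module.End.mul_apply]
    exact ih (by simpa [add_right_comm] using hp.pderiv (i := i))

noncomputable def hessian (f : MvPolynomial σ R) : Matrix σ σ (MvPolynomial σ R) :=
  Matrix.of fun i j => pderiv i (pderiv j f)

variable [Fintype σ]

variable (R σ) in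
noncomputable def linearForm : (σ → R) →ₗ[R] MvPolynomial σ R :=
  Fintype.linearCombination R X

theorem linearForm_apply (c : σ → R) : linearForm R σ c = ∑ i, C (c i) * X i := by
  simp [linearForm, Fintype.linearCombination_apply, smul_eq_C_mul]

theorem linearForm_injective : Function.Injective (linearForm R σ) :=
  (linearIndependent_X σ R).fintypeLinearCombination_injective

theorem range_linearForm : LinearMap.range (linearForm R σ) = homogeneousSubmodule σ R 1 := by
  rw [homogeneousSubmodule_one_eq_span_X, linearForm, Fintype.range_linearCombination]

theorem isHomogeneous_linearForm (c : σ → R) : (linearForm R σ c).IsHomogeneous 1 := by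
  rw [← mem_homogeneousSubmodule, ← range_linearForm]
  exact LinearMap.mem_range_self _ c

theorem IsHomogeneous.exists_eq_linearForm {p : MvPolynomial σ R} (hp : p.IsHomogeneous 1) :
    ∃ c, p = linearForm R σ c := by
  rw [← mem_homogeneousSubmodule, ← range_linearForm] at hp
  obtain ⟨c, rfl⟩ := hp
  exact ⟨c, rfl⟩

theorem pderiv_linearForm (c : σ → R) (k : σ) : pderiv k (linearForm R σ c) = C (c k) := by
  classical
  simp [linearForm_apply, pderiv_X, Pi.single_apply]

theorem sum_smul_pderiv_linearForm (a c : σ → R) :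
    ∑ i, a i • pderiv i (linearForm R σ c) = C (eval a (linearForm R σ c)) := by
  simp only [pderiv_linearForm, smul_eq_C_mul, ← C_mul, ← map_sum]
  simp [linearForm_apply, mul_comm]

theorem sum_smul_pderiv_of_isHomogeneous_two {q : MvPolynomial σ R} (hq : q.IsHomogeneous 2)
    (a : σ → R) : ∑ i, a i • pderiv i q = linearForm R σ fun k => eval a (pderiv k q) := by
  have hlin : ∑ i, a i • pderiv i q ∈ homogeneousSubmodule σ R 1 :=
    Submodule.sum_mem _ fun i _ => Submodule.smul_mem _ _ hq.pderiv
  obtain ⟨d, hd⟩ := IsHomogeneous.exists_eq_linearForm hlin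
  rw [hd]
  congr 1
  funext k
  obtain ⟨e, he⟩ := (hq.pderiv (i := k)).exists_eq_linearForm
  apply C_injective σ R
  calc C (d k) = pderiv k (linearForm R σ d) := (pderiv_linearForm d k).symm
    _ = ∑ i, a i • pderiv i (pderiv k q) := by
      simp only [← hd, map_sum, Derivation.map_smul]
      exact Finset.sum_congr rfl fun i _ => by rw [pderiv_pderiv_comm]
    _ = C (eval a (pderiv k q)) := by rw [he, sum_smul_pderiv_linearForm]

end MvPolynomial

section applyOp

variable {K : Type*} [CommSemiring K] {n : ℕ}

noncomputable def diffOp (m : Fin n →₀ ℕ) : Module.End K (MvPolynomial (Fin n) K) :=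
  (List.ofFn fun i : Fin n => ((pderiv i).toLinearMap ^ m i : Module.End K _)).prod

theorem applyOp_eq_sum (α f : MvPolynomial (Fin n) K) :
    applyOp α f = (AddMonoidAlgebra.coeff α).sum fun m c => c • diffOp m f := rfl

theorem diffOp_zero : diffOp (0 : Fin n →₀ ℕ) = (1 : Module.End K _) := by
  simp [diffOp]

theorem diffOp_single (i : Fin n) (k : ℕ) :
    diffOp (Finsupp.single i k) = ((pderiv i).toLinearMap ^ k : Module.End K _) := by
  refine (List.prod_ofFn_eq_of_forall_ne_eq_one _ i fun j hj => ?_).trans ?_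
  · simp [Ne.symm hj]
  · simp

theorem diffOp_add (m m' : Fin n →₀ ℕ) :
    diffOp (m + m') = (diffOp m * diffOp m' : Module.End K (MvPolynomial (Fin n) K)) := by
  have hcomm (i j : Fin n) :
      Commute ((pderiv i).toLinearMap : Module.End K (MvPolynomial (Fin n) K))
        (pderiv j).toLinearMap :=
    LinearMap.ext (pderiv_pderiv_comm i j)
  simp only [diffOp, Finsupp.add_apply, pow_add]
  exact List.prod_ofFn_mul_of_commute _ _ fun i j => (hcomm i j).pow_pow _ _

theorem applyOp_monomial (m : Fin n →₀ ℕ) (c : K) (f : MvPolynomial (Fin n) K) :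
    applyOp (monomial m c) f = c • diffOp m f := by
  rw [applyOp_eq_sum]
  exact Finsupp.sum_single_index (zero_smul _ _)

theorem applyOp_add (α β f : MvPolynomial (Fin n) K) :
    applyOp (α + β) f = applyOp α f + applyOp β f := by
  simp only [applyOp_eq_sum]
  exact Finsupp.sum_add_index' (fun _ => zero_smul _ _) fun _ _ _ => add_smul _ _ _

theorem applyOp_add_right (α f g : MvPolynomial (Fin n) K) :
    applyOp α (f + g) = applyOp α f + applyOp α g := by
  simp only [applyOp_eq_sum, map_add, smul_add, Finsupp.sum_add]

theorem applyOp_smul (c : K) (α f : MvPolynomial (Fin n) K) :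
    applyOp (c • α) f = c • applyOp α f := by
  rw [applyOp_eq_sum, applyOp_eq_sum, Finsupp.smul_sum]
  refine (Finsupp.sum_smul_index' ?_).trans ?_
  · simp
  · simp [mul_smul]

theorem applyOp_sum {ι : Type*} (s : Finset ι) (α : ι → MvPolynomial (Fin n) K)
    (f : MvPolynomial (Fin n) K) : applyOp (∑ i ∈ s, α i) f = ∑ i ∈ s, applyOp (α i) f := by
  classical
  induction s using Finset.induction with
  | empty => simp [applyOp_eq_sum]
  | insert _ _ hi ih => rw [Finset.sum_insert hi, Finset.sum_insert hi, applyOp_add, ih]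

theorem applyOp_mul (α β f : MvPolynomial (Fin n) K) :
    applyOp (α * β) f = applyOp α (applyOp β f) := by
  induction α using MvPolynomial.induction_on' with
  | monomial m c =>
    induction β using MvPolynomial.induction_on' with
    | monomial m' c' =>
      rw [monomial_mul, applyOp_monomial, applyOp_monomial, applyOp_monomial, diffOp_add,
        Module.End.mul_apply, map_smul, smul_smul]
    | add p q hp hq => rw [mul_add, applyOp_add, hp, hq, applyOp_add, applyOp_add_right]
  | add p q hp hq => rw [add_mul, applyOp_add, applyOp_add, hp, hq]

theorem applyOp_X (i : Fin n) (f : MvPolynomial (Fin n) K) : applyOp (X i) f = pderiv i f := by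
  rw [X, applyOp_monomial, one_smul, diffOp_single, pow_one]
  rfl

theorem applyOp_linearForm (c : Fin n → K) (f : MvPolynomial (Fin n) K) :
    applyOp (linearForm K _ c) f = ∑ i, c i • pderiv i f := by
  simp only [linearForm, Fintype.linearCombination_apply, applyOp_sum, applyOp_smul, applyOp_X]

theorem isHomogeneous_diffOp_apply {p : MvPolynomial (Fin n) K} {m : Fin n →₀ ℕ} {e : ℕ}
    (hp : p.IsHomogeneous (m.degree + e)) : (diffOp m p).IsHomogeneous e := by
  induction m using Finsupp.induction generalizing e with
  | zero => simpa [diffOp_zero] using hp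
  | single_add i k m _ _ ih =>
    rw [map_add, Finsupp.degree_single, add_assoc, add_left_comm] at hp
    rw [diffOp_add, diffOp_single, Module.End.mul_apply]
    exact (ih hp).pderiv_pow i

theorem isHomogeneous_applyOp {α f : MvPolynomial (Fin n) K} {d e : ℕ}
    (hα : α.IsHomogeneous d) (hf : f.IsHomogeneous (d + e)) :
    (applyOp α f).IsHomogeneous e := by
  refine IsHomogeneous.sum _ _ _ fun m hm => ?_
  have hm : m.degree = d := not_imp_comm.mp hα.coeff_eq_zero (mem_support_iff.mp hm)
  rw [smul_eq_C_mul]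
  exact (isHomogeneous_diffOp_apply (hm ▸ hf)).C_mul _

theorem applyOp_linearForm_mul_linearForm {f : MvPolynomial (Fin n) K} (hf : f.IsHomogeneous 3)
    (a c : Fin n → K) :
    applyOp (linearForm K _ a * linearForm K _ c) f
      = linearForm K _ (((hessian f).map (eval a)).mulVec c) := by
  calc applyOp (linearForm K _ a * linearForm K _ c) f
      = ∑ j, c j • ∑ i, a i • pderiv i (pderiv j f) := by
        simp only [applyOp_mul, applyOp_linearForm, map_sum, Derivation.map_smul, Finset.smul_sum,
          smul_smul, mul_comm (a _)]
        exact Finset.sum_comm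
    _ = ∑ j, c j • linearForm K _ fun k => eval a (pderiv k (pderiv j f)) := by
        simp only [sum_smul_pderiv_of_isHomogeneous_two (hf.pderiv (i := _)) a]
    _ = linearForm K _ (((hessian f).map (eval a)).mulVec c) := by
        simp only [← map_smul, ← map_sum]
        congr 1
        ext k
        simp [hessian, Matrix.mulVec, dotProduct, mul_comm]

end applyOp

section Field

variable {K : Type*} [Field K] {n : ℕ} {f : MvPolynomial (Fin n) K}

theorem forall_applyOp_linearForm_mul_eq_zero_iff (hf : f.IsHomogeneous 3)
    (hind : LinearIndependent K fun i => pderiv i f) (a : Fin n → K) :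
    (∀ α : MvPolynomial (Fin n) K, α.IsHomogeneous 1 →
        applyOp (linearForm K _ a * α) f = 0 → applyOp α f = 0) ↔
      IsUnit ((hessian f).map (eval a)).det := by
  rw [← Matrix.isUnit_iff_isUnit_det, ← Matrix.mulVec_injective_iff_isUnit,
    ← Matrix.coe_mulVecLin, injective_iff_map_eq_zero]
  refine ⟨fun h c hc => ?_, fun h α hα hα0 => ?_⟩
  · have hc0 := h (linearForm K _ c) (isHomogeneous_linearForm c)
      (by rw [applyOp_linearForm_mul_linearForm hf, ← Matrix.mulVecLin_apply, hc, map_zero])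
    rw [applyOp_linearForm] at hc0
    exact funext (Fintype.linearIndependent_iff.mp hind c hc0)
  · obtain ⟨c, rfl⟩ := hα.exists_eq_linearForm
    rw [applyOp_linearForm_mul_linearForm hf, ← map_zero (linearForm K (Fin n))] at hα0
    rw [h c (linearForm_injective hα0), map_zero]
    simp [applyOp]

theorem exists_applyOp_eq_applyOp_linearForm_mul (hf : f.IsHomogeneous 3) {a : Fin n → K}
    (ha : IsUnit ((hessian f).map (eval a)).det) {β : MvPolynomial (Fin n) K}
    (hβ : β.IsHomogeneous 2) :
    ∃ α : MvPolynomial (Fin n) K,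
      α.IsHomogeneous 1 ∧ applyOp β f = applyOp (linearForm K _ a * α) f := by
  obtain ⟨d, hd⟩ := (isHomogeneous_applyOp (e := 1) hβ hf).exists_eq_linearForm
  obtain ⟨c, rfl⟩ := Matrix.mulVec_surjective_iff_isUnit.mpr
    ((Matrix.isUnit_iff_isUnit_det _).mpr ha) d
  exact ⟨linearForm K _ c, isHomogeneous_linearForm c,
    by rw [hd, applyOp_linearForm_mul_linearForm hf]⟩

end Field

theorem SLP_iff_hessian_nonzero_general (K : Type*) [Field K] (N : ℕ)
    (f : MvPolynomial (Fin (N + 1)) K) (hf : f.IsHomogeneous 3)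
    (hind : LinearIndependent K (fun i : Fin (N + 1) => pderiv i f))
    (a : Fin (N + 1) → K) :
    (let L : MvPolynomial (Fin (N + 1)) K := ∑ i : Fin (N + 1), C (a i) * X i
     (∀ α : MvPolynomial (Fin (N + 1)) K, α.IsHomogeneous 1 →
        applyOp (L * α) f = 0 → applyOp α f = 0) ∧
     (∀ β : MvPolynomial (Fin (N + 1)) K, β.IsHomogeneous 2 →
        ∃ α : MvPolynomial (Fin (N + 1)) K, α.IsHomogeneous 1 ∧
          applyOp β f = applyOp (L * α) f)) ↔
      eval a (Matrix.of fun i j : Fin (N + 1) => pderiv i (pderiv j f)).det ≠ 0 := by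
  rw [← linearForm_apply]
  change _ ↔ eval a (hessian f).det ≠ 0
  rw [RingHom.map_det, ← isUnit_iff_ne_zero]
  have hinj := forall_applyOp_linearForm_mul_eq_zero_iff hf hind a
  exact ⟨fun h => hinj.mp h.1,
    fun h => ⟨hinj.mpr h, fun _ hβ => exists_applyOp_eq_applyOp_linearForm_mul hf h hβ⟩⟩

/-- Let `f ∈ K[x₀,…,x_N]` be a cubic form with linearly independent
partial derivatives and `A = Q/Ann_f` the associated Artinian Gorenstein algebra.
For a linear form `L = a₀X₀ + … + a_N X_N ∈ A₁`, the multiplication map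
`μ_L : A₁ → A₂` is an isomorphism iff the Hessian determinant of `f` does not vanish
at `(a₀,…,a_N)`.  Identifying `A_k = Q_k/(Ann_f)_k`, the map `μ_L` being an
isomorphism is expressed by: (injectivity) `(Lα)(f) = 0 → α(f) = 0` for all
`α ∈ Q₁`, and (surjectivity) every class `β ∈ Q₂` modulo `Ann_f` is of the form
`Lα`, i.e. `β(f) = (Lα)(f)` for some `α ∈ Q₁`. -/
theorem SLP_iff_hessian_nonzero (K : Type*) [Field K] [CharZero K] (N : ℕ)
    (f : MvPolynomial (Fin (N + 1)) K) (hf : f.IsHomogeneous 3)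
    (hind : LinearIndependent K (fun i : Fin (N + 1) => pderiv i f))
    (a : Fin (N + 1) → K) :
    (let L : MvPolynomial (Fin (N + 1)) K := ∑ i : Fin (N + 1), C (a i) * X i
     (∀ α : MvPolynomial (Fin (N + 1)) K, α.IsHomogeneous 1 →
        applyOp (L * α) f = 0 → applyOp α f = 0) ∧
     (∀ β : MvPolynomial (Fin (N + 1)) K, β.IsHomogeneous 2 →
        ∃ α : MvPolynomial (Fin (N + 1)) K, α.IsHomogeneous 1 ∧
          applyOp β f = applyOp (L * α) f)) ↔
      eval a (Matrix.of fun i j : Fin (N + 1) => pderiv i (pderiv j f)).det ≠ 0 :=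
  SLP_iff_hessian_nonzero_general K N f hf hind a
end

section
/- Let K be an algebraically closed field of characteristic zero and f ∈ K[x₀,…,x₄] an irreducible cubic form whose singular locus Sing(V(f)) contains the 2-plane V(x₃,x₄), and such that V(f) is not a cone (equivalently, the partial derivatives of f are linearly independent). Then there is a linear change of coordinates transforming f into x₀x₃² + x₁x₃x₄ + x₂x₄². -/
/-! The vanishing of `f`, `∂f/∂x₃` and `∂f/∂x₄` on the plane forces every monomial of `f` to
have degree at least two in `x₃, x₄`, so `f = ℓ₀x₃² + ℓ₁x₃x₄ + ℓ₂x₄²` with linear forms `ℓᵢ`: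
`f` is the normal form pulled back along the linear map `x ↦ (ℓ₀, ℓ₁, ℓ₂, x₃, x₄)`. By the chain
rule, a vector in the kernel of this map gives a linear relation among the partials of `f`.
There is none, so the map is invertible, and its inverse is the change of coordinates. -/

open MvPolynomial Matrix

namespace MvPolynomial

variable {σ R : Type*} [CommRing R]

section Substitution

variable [Fintype σ]

noncomputable def linearSubst (N : Matrix σ σ R) : MvPolynomial σ R →ₐ[R] MvPolynomial σ R :=
  aeval fun i => ∑ j, N i j • X j

theorem linearSubst_X (N : Matrix σ σ R) (i : σ) : linearSubst N (X i) = ∑ j, N i j • X j :=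
  aeval_X _ _

theorem linearSubst_one [DecidableEq σ] : linearSubst (1 : Matrix σ σ R) = AlgHom.id R _ := by
  ext i : 1
  simp [linearSubst_X, one_apply, ite_smul]

theorem linearSubst_comp_linearSubst (M N : Matrix σ σ R) :
    (linearSubst M).comp (linearSubst N) = linearSubst (N * M) := by
  ext i : 1
  simp only [AlgHom.comp_apply, linearSubst_X, map_sum, map_smul, mul_apply, Finset.sum_smul,
    Finset.smul_sum, smul_smul]
  exact Finset.sum_comm

theorem linearSubst_linearSubst (M N : Matrix σ σ R) (p : MvPolynomial σ R) :
    linearSubst M (linearSubst N p) = linearSubst (N * M) p := by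
  rw [← linearSubst_comp_linearSubst, AlgHom.comp_apply]

theorem pderiv_linearSubst (N : Matrix σ σ R) (p : MvPolynomial σ R) (j : σ) :
    pderiv j (linearSubst N p) = ∑ i, N i j • linearSubst N (pderiv i p) := by
  classical
  induction p using MvPolynomial.induction_on with
  | C a => simp [linearSubst]
  | add p q hp hq => simp [hp, hq, Finset.sum_add_distrib]
  | mul_X p k h =>
    simp only [map_mul, Derivation.leibniz, h, linearSubst_X, pderiv_X, smul_eq_mul]
    simp [Pi.single_apply, smul_add, Finset.sum_add_distrib, Finset.mul_sum, linearSubst_X,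
      apply_ite]

theorem sum_smul_pderiv_linearSubst (N : Matrix σ σ R) (p : MvPolynomial σ R) (v : σ → R) :
    ∑ j, v j • pderiv j (linearSubst N p) = ∑ i, (N *ᵥ v) i • linearSubst N (pderiv i p) := by
  simp only [pderiv_linearSubst, Finset.smul_sum, smul_smul, mulVec, dotProduct,
    Finset.sum_smul]
  rw [Finset.sum_comm]
  simp only [mul_comm]

theorem isUnit_of_linearIndependent_pderiv_linearSubst {K : Type*} [Field K] [DecidableEq σ]
    {N : Matrix σ σ K} {p : MvPolynomial σ K}
    (h : LinearIndependent K fun j => pderiv j (linearSubst N p)) : IsUnit N := by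
  rw [← mulVec_injective_iff_isUnit]
  refine (injective_iff_map_eq_zero (mulVecLin N)).2 fun v hv => ?_
  funext j
  refine Fintype.linearIndependent_iff.1 h v ?_ j
  rw [sum_smul_pderiv_linearSubst, show N *ᵥ v = 0 from hv]
  simp

end Substitution

theorem coeff_eq_zero_of_mem_span_X {s : Set σ} {f : MvPolynomial σ R}
    (hf : f ∈ Ideal.span (X '' s)) {m : σ →₀ ℕ} (hm : ∀ i ∈ s, m i = 0) : coeff m f = 0 := by
  by_contra hne
  obtain ⟨i, hi, hmi⟩ := mem_ideal_span_X_image.1 hf m (mem_support_iff.2 hne)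
  exact hmi (hm i hi)

theorem coeff_eq_zero_of_pderiv_mem_span_X {s : Finset σ} {f : MvPolynomial σ R}
    (hf : f ∈ Ideal.span (X '' s)) (hd : ∀ i ∈ s, pderiv i f ∈ Ideal.span (X '' s))
    {m : σ →₀ ℕ} (hm : ∑ i ∈ s, m i ≤ 1) : coeff m f = 0 := by
  classical
  by_cases h0 : ∀ i ∈ s, m i = 0
  · exact coeff_eq_zero_of_mem_span_X hf h0
  push Not at h0
  obtain ⟨i, hi, hmi⟩ := h0
  -- `m = m' + eᵢ` with `m'` vanishing on `s`, and `coeff m f = coeff m' (∂f/∂xᵢ)`.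
  obtain ⟨m', rfl⟩ : ∃ m', m = m' + Finsupp.single i 1 :=
    ⟨m - Finsupp.single i 1, (tsub_add_cancel_of_le (Finsupp.single_le_iff.2 (by omega))).symm⟩
  have hsum : ∑ j ∈ s, (m' + Finsupp.single i 1 : σ →₀ ℕ) j = ∑ j ∈ s, m' j + 1 := by
    simp [Finset.sum_add_distrib, Finsupp.single_apply, hi]
  have hm' : ∀ j ∈ s, m' j = 0 := Finset.sum_eq_zero_iff.1 (by omega)
  have := coeff_eq_zero_of_mem_span_X (hd i hi) hm'
  rwa [coeff_pderiv, hm' i hi, Nat.cast_zero, zero_add, mul_one] at this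

attribute [local instance] MvPolynomial.gradedAlgebra in
theorem homogeneousComponent_mul_of_isHomogeneous {p q : MvPolynomial σ R} {k : ℕ}
    (hq : q.IsHomogeneous k) (n : ℕ) :
    homogeneousComponent (n + k) (p * q) = homogeneousComponent n p * q := by
  have := DirectSum.coe_decompose_mul_of_right_mem_of_le (homogeneousSubmodule σ R) (a := p)
    (n := n + k) hq (by omega)
  have hdec (φ : MvPolynomial σ R) (i : ℕ) :
      (DirectSum.decompose (homogeneousSubmodule σ R) φ i : MvPolynomial σ R) =
        homogeneousComponent i φ :=
    decomposition.decompose'_apply φ i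
  rwa [hdec, hdec, Nat.add_sub_cancel] at this

theorem exists_eq_sum_smul_X_of_isHomogeneous_one [Fintype σ] {L : MvPolynomial σ R}
    (hL : L.IsHomogeneous 1) : ∃ a : σ → R, L = ∑ j, a j • X j := by
  rw [← mem_homogeneousSubmodule, homogeneousSubmodule_one_eq_span_X,
    Submodule.mem_span_range_iff_exists_fun] at hL
  exact hL.imp fun _ h => h.symm

theorem IsHomogeneous.exists_eq_sum_mul_of_mem_span {ι : Type*} [Fintype ι]
    {g : ι → MvPolynomial σ R} {f : MvPolynomial σ R} {n k : ℕ}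
    (hg : ∀ i, (g i).IsHomogeneous k) (hf : f.IsHomogeneous (n + k))
    (hmem : f ∈ Ideal.span (Set.range g)) :
    ∃ c : ι → MvPolynomial σ R, (∀ i, (c i).IsHomogeneous n) ∧ f = ∑ i, c i * g i := by
  obtain ⟨c, rfl⟩ := Ideal.mem_span_range_iff_exists_fun.1 hmem
  refine ⟨fun i => homogeneousComponent n (c i), fun i => homogeneousComponent_isHomogeneous n _,
    ?_⟩
  rw [← homogeneousComponent_eq_self hf, map_sum]
  exact Finset.sum_congr rfl fun i _ => homogeneousComponent_mul_of_isHomogeneous (hg i) n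

theorem mem_span_quadratic_monomials_of_coeff_eq_zero {p q : σ} (hpq : p ≠ q)
    {f : MvPolynomial σ R} (hf : ∀ m : σ →₀ ℕ, m p + m q ≤ 1 → coeff m f = 0) :
    f ∈ Ideal.span (Set.range fun i : Fin 3 =>
      monomial (![Finsupp.single p 2, Finsupp.single p 1 + Finsupp.single q 1,
        Finsupp.single q 2] i) (1 : R)) := by
  rw [Set.range_comp' (fun s => monomial s (1 : R)), mem_ideal_span_monomial_image]
  intro m hm
  have h2 : 2 ≤ m p + m q := by
    by_contra h
    exact mem_support_iff.1 hm (hf m (by omega))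
  rcases (by omega : 2 ≤ m p ∨ 2 ≤ m q ∨ (1 ≤ m p ∧ 1 ≤ m q)) with h | h | ⟨hp, hq⟩
  · exact ⟨_, ⟨0, rfl⟩, Finsupp.single_le_iff.2 h⟩
  · exact ⟨_, ⟨2, rfl⟩, Finsupp.single_le_iff.2 h⟩
  · classical
    refine ⟨_, ⟨1, rfl⟩, fun j => ?_⟩
    simp only [Matrix.cons_val_one, Matrix.cons_val_zero, Finsupp.add_apply, Finsupp.single_apply]
    split_ifs <;> grind

theorem IsHomogeneous.exists_eq_quadratic_in_X_X {f : MvPolynomial σ R} {n : ℕ}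
    (hf : f.IsHomogeneous (n + 2)) {p q : σ} (hpq : p ≠ q)
    (hcoeff : ∀ m : σ →₀ ℕ, m p + m q ≤ 1 → coeff m f = 0) :
    ∃ L₀ L₁ L₂ : MvPolynomial σ R, L₀.IsHomogeneous n ∧ L₁.IsHomogeneous n ∧
      L₂.IsHomogeneous n ∧ f = L₀ * X p ^ 2 + L₁ * (X p * X q) + L₂ * X q ^ 2 := by
  have hdeg2 (i : Fin 3) : (monomial (![Finsupp.single p 2,
      Finsupp.single p 1 + Finsupp.single q 1, Finsupp.single q 2] i) (1 : R)).IsHomogeneous 2 :=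
    isHomogeneous_monomial _ (by fin_cases i <;> simp)
  obtain ⟨c, hc, rfl⟩ := hf.exists_eq_sum_mul_of_mem_span hdeg2
    (mem_span_quadratic_monomials_of_coeff_eq_zero hpq hcoeff)
  refine ⟨c 0, c 1, c 2, hc 0, hc 1, hc 2, ?_⟩
  simp [Fin.sum_univ_three, X, monomial_mul, monomial_pow, Finsupp.smul_single]

noncomputable def singularPlaneCubic (R : Type*) [CommRing R] : MvPolynomial (Fin 5) R :=
  X 0 * X 3 ^ 2 + X 1 * X 3 * X 4 + X 2 * X 4 ^ 2

theorem linearSubst_singularPlaneCubic (a b c : Fin 5 → R) :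
    linearSubst (Matrix.of ![a, b, c, Pi.single 3 1, Pi.single 4 1]) (singularPlaneCubic R) =
      (∑ j, a j • X j) * X 3 ^ 2 + (∑ j, b j • X j) * (X 3 * X 4) +
        (∑ j, c j • X j) * X 4 ^ 2 := by
  simp [singularPlaneCubic, linearSubst_X, Pi.single_apply, ite_smul]
  ring

end MvPolynomial

theorem singular_plane_normal_form_general (K : Type*) [Field K]
    (f : MvPolynomial (Fin 5) K) (hf3 : f.IsHomogeneous 3)
    (hsing : f ∈ Ideal.span ({X 3, X 4} : Set (MvPolynomial (Fin 5) K)) ∧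
      ∀ i : Fin 5, pderiv i f ∈ Ideal.span ({X 3, X 4} : Set (MvPolynomial (Fin 5) K)))
    (hnotcone : LinearIndependent K (fun i : Fin 5 => pderiv i f)) :
    ∃ M : GL (Fin 5) K,
      (aeval fun i : Fin 5 =>
          ∑ j : Fin 5, (M : Matrix (Fin 5) (Fin 5) K) i j • (X j : MvPolynomial (Fin 5) K)) f =
        X 0 * X 3 ^ 2 + X 1 * X 3 * X 4 + X 2 * X 4 ^ 2 := by
  obtain ⟨hf, hpd⟩ := hsing
  have hspan : Ideal.span ({X 3, X 4} : Set (MvPolynomial (Fin 5) K)) =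
      Ideal.span (X '' ↑({3, 4} : Finset (Fin 5))) := by
    simp [Set.image_insert_eq]
  have hlow (m : Fin 5 →₀ ℕ) (hm : m 3 + m 4 ≤ 1) : coeff m f = 0 :=
    coeff_eq_zero_of_pderiv_mem_span_X (hspan ▸ hf) (fun i _ => hspan ▸ hpd i) (by simpa using hm)
  obtain ⟨L₀, L₁, L₂, h₀, h₁, h₂, hfL⟩ :=
    hf3.exists_eq_quadratic_in_X_X (n := 1) (by decide : (3 : Fin 5) ≠ 4) hlow
  obtain ⟨a, rfl⟩ := exists_eq_sum_smul_X_of_isHomogeneous_one h₀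
  obtain ⟨b, rfl⟩ := exists_eq_sum_smul_X_of_isHomogeneous_one h₁
  obtain ⟨c, rfl⟩ := exists_eq_sum_smul_X_of_isHomogeneous_one h₂
  set N := Matrix.of ![a, b, c, Pi.single 3 1, Pi.single 4 1]
  have hfN : f = linearSubst N (singularPlaneCubic K) := by
    rw [linearSubst_singularPlaneCubic, hfL]
  have hN : IsUnit N := isUnit_of_linearIndependent_pderiv_linearSubst (hfN ▸ hnotcone)
  refine ⟨hN.unit⁻¹, ?_⟩
  change linearSubst _ f = singularPlaneCubic K
  rw [hfN, linearSubst_linearSubst, hN.mul_val_inv, linearSubst_one, AlgHom.id_apply]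

/-- Let `K` be algebraically closed of characteristic zero and
`f ∈ K[x₀,…,x₄]` an irreducible cubic form whose singular locus contains the plane
`V(x₃,x₄)` (all first partials of `f` vanish on it, i.e. lie in the ideal
`(x₃,x₄)`), and which is not a cone (the partials are linearly independent).
Then a linear change of coordinates transforms `f` into `x₀x₃² + x₁x₃x₄ + x₂x₄²`. -/
theorem singular_plane_normal_form (K : Type*) [Field K] [IsAlgClosed K] [CharZero K]
    (f : MvPolynomial (Fin 5) K) (hf3 : f.IsHomogeneous 3) (hirr : Irreducible f)
    (hsing : f ∈ Ideal.span ({X 3, X 4} : Set (MvPolynomial (Fin 5) K)) ∧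
      ∀ i : Fin 5, pderiv i f ∈ Ideal.span ({X 3, X 4} : Set (MvPolynomial (Fin 5) K)))
    (hnotcone : LinearIndependent K (fun i : Fin 5 => pderiv i f)) :
    ∃ M : GL (Fin 5) K,
      (aeval fun i : Fin 5 =>
          ∑ j : Fin 5, (M : Matrix (Fin 5) (Fin 5) K) i j • (X j : MvPolynomial (Fin 5) K)) f =
        X 0 * X 3 ^ 2 + X 1 * X 3 * X 4 + X 2 * X 4 ^ 2 :=
  singular_plane_normal_form_general K f hf3 hsing hnotcone
end
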